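/- Let Π = Π_{d+1}(A) be the (d+1)-Calabi-Yau completion of a smooth dg algebra A, P ∈ silt^d A a d-silting object and Q ∈ add P such that the left mutation μ⁻_Q(P) exists and is d-silting. Then the left mutation μ⁻_{Q⊗^L_AΠ}(P⊗^L_AΠ) exists in per Π and is isomorphic to μ⁻_Q(P)⊗^L_AΠ. -/
import Mathlib


/-!
STATEMENT 19: Let Π = Π_{d+1}(A) be the (d+1)-Calabi-Yau completion of a smooth dg
algebra A, P ∈ silt^d A a d-silting object and Q ∈ add P such that the left
mutation μ⁻_Q(P) exists and is d-silting. Then the left mutation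
μ⁻_{Q⊗^L_AΠ}(P⊗^L_AΠ) exists in per Π and is isomorphic to μ⁻_Q(P)⊗^L_AΠ.

The setting is axiomatized: `DA = per A`, `DB = per Π`, `ind = - ⊗^L_A Π` the
induction triangle functor, `th = - ⊗^L_A Θ` with Θ = RHom_{A^e}(A, A^e)[d] the
(shifted) inverse dualizing bimodule; a d-silting object is a silting object P
with Hom(P, P⊗Θ[i]) = 0 for i > 0; by the silting-silting correspondence
(Theorem `from d-silting to ctilt`, supplied as a hypothesis), P is d-silting iff
ind P is silting.
-/

open CategoryTheory CategoryTheory.Limits CategoryTheory.Pretriangulated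

universe w v u v' u'

section Defs

variable {E : Type*} [Category E] [Preadditive E] [HasZeroObject E] [HasShift E ℤ]
  [∀ n : ℤ, (CategoryTheory.shiftFunctor E n).Additive] [Pretriangulated E]
  [HasBinaryBiproducts E]

/-- A thick subcategory. -/
structure IsThick (Z : Set E) : Prop where
  iso : ∀ {X Y : E}, (X ≅ Y) → X ∈ Z → Y ∈ Z
  shift : ∀ X ∈ Z, ∀ n : ℤ, X⟦n⟧ ∈ Z
  ext₂ : ∀ T ∈ distTriang E, T.obj₁ ∈ Z → T.obj₃ ∈ Z → T.obj₂ ∈ Z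
  summand : ∀ X Y : E, (X ⊞ Y) ∈ Z → X ∈ Z

/-- `P` generates `E` as a thick subcategory. -/
def GeneratesThickObj (P : E) : Prop :=
  ∀ Z : Set E, IsThick Z → P ∈ Z → ∀ X : E, X ∈ Z

/-- An object `P` is presilting. -/
def IsPresiltingObj (P : E) : Prop :=
  ∀ i : ℤ, 1 ≤ i → ∀ f : P ⟶ P⟦i⟧, f = 0

/-- An object `P` is silting. -/
def IsSiltingObj (P : E) : Prop := IsPresiltingObj P ∧ GeneratesThickObj P

/-- Iteration of an endofunctor. -/
def iterObj (F : E ⥤ E) : ℕ → E → E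
  | 0, X => X
  | n + 1, X => F.obj (iterObj F n X)

end Defs

variable (k : Type w) [Field k]

-- `DA` is the perfect derived category `per A`.
variable (DA : Type u) [Category.{v} DA] [Preadditive DA] [Linear k DA]
  [HasZeroObject DA] [HasShift DA ℤ]
  [∀ n : ℤ, (CategoryTheory.shiftFunctor DA n).Additive] [Pretriangulated DA]
  [HasBinaryBiproducts DA]

-- `DB` is the perfect derived category `per Π` of the Calabi-Yau completion Π.
variable (DB : Type u') [Category.{v'} DB] [Preadditive DB] [Linear k DB]
  [HasZeroObject DB] [HasShift DB ℤ]
  [∀ n : ℤ, (CategoryTheory.shiftFunctor DB n).Additive] [Pretriangulated DB]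
  [HasBinaryBiproducts DB]

-- the induction functor  ind = - ⊗^L_A B  and the bimodule functor  th = - ⊗^L_A θ
variable (ind : DA ⥤ DB) [ind.CommShift ℤ] [ind.IsTriangulated] [ind.Additive]
variable (th : DA ⥤ DA) [th.CommShift ℤ] [th.Additive]


section MoreDefs

variable {E : Type*} [Category E] [Preadditive E] [HasZeroObject E] [HasShift E ℤ]
  [∀ n : ℤ, (CategoryTheory.shiftFunctor E n).Additive] [Pretriangulated E]
  [HasBinaryBiproducts E]

/-- Objects obtained as finite direct sums of objects of `S`. -/
inductive sums (S : Set E) : E → Prop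
  | of {X : E} : X ∈ S → sums S X
  | biprod {X Y : E} : sums S X → sums S Y → sums S (X ⊞ Y)

/-- The additive closure `add S`. -/
def addSet (S : Set E) : Set E :=
  {X | ∃ Y Z : E, sums S Y ∧ Nonempty (Y ≅ X ⊞ Z)}

/-- `f : P ⟶ Q₀` is a left `add Q`-approximation of `P`. -/
def IsLeftApprox (Q P Q₀ : E) (f : P ⟶ Q₀) : Prop :=
  Q₀ ∈ addSet ({Q} : Set E) ∧
    ∀ Q' ∈ addSet ({Q} : Set E), ∀ g : P ⟶ Q', ∃ u : Q₀ ⟶ Q', f ≫ u = g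

/-- `M` is a left mutation `μ⁻_Q(P)`: there is a left `add Q`-approximation
`f : P ⟶ Q₀` and an exchange triangle `P → Q₀ → Z → P[1]` with `M ≅ Z ⊕ Q`. -/
def IsLeftMutation (P Q M : E) : Prop :=
  ∃ (Q₀ : E) (f : P ⟶ Q₀) (Z : E) (g : Q₀ ⟶ Z) (h : Z ⟶ P⟦(1:ℤ)⟧),
    IsLeftApprox Q P Q₀ f ∧ (Triangle.mk f g h ∈ distTriang E) ∧
      Nonempty (M ≅ Z ⊞ Q)

end MoreDefs

section Helpers
set_option linter.unusedSectionVars false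

variable {E : Type*} [Category E] [Preadditive E] [HasZeroObject E] [HasShift E ℤ]
  [∀ n : ℤ, (CategoryTheory.shiftFunctor E n).Additive] [Pretriangulated E]
  [HasBinaryBiproducts E]

lemma addSet_iso {S : Set E} {X Y : E} (e : X ≅ Y) (h : X ∈ addSet S) : Y ∈ addSet S := by
  obtain ⟨W, Z, hW, ⟨e'⟩⟩ := h
  exact ⟨W, Z, hW, ⟨e'.trans (biprod.mapIso e (Iso.refl Z))⟩⟩

lemma addSet_summand {S : Set E} {X Z : E} (h : (X ⊞ Z) ∈ addSet S) : X ∈ addSet S := by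
  obtain ⟨W, Z₂, hW, ⟨e⟩⟩ := h
  exact ⟨W, Z ⊞ Z₂, hW, ⟨e.trans (biprod.associator X Z Z₂)⟩⟩

lemma addSet_biprod {S : Set E} {X Y : E} (hX : X ∈ addSet S) (hY : Y ∈ addSet S) :
    (X ⊞ Y) ∈ addSet S := by
  obtain ⟨W₁, Z₁, h1, ⟨e1⟩⟩ := hX
  obtain ⟨W₂, Z₂, h2, ⟨e2⟩⟩ := hY
  refine ⟨W₁ ⊞ W₂, Z₁ ⊞ Z₂, sums.biprod h1 h2, ⟨?_⟩⟩
  calc W₁ ⊞ W₂ ≅ (X ⊞ Z₁) ⊞ (Y ⊞ Z₂) := biprod.mapIso e1 e2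
    _ ≅ X ⊞ (Z₁ ⊞ (Y ⊞ Z₂)) := biprod.associator ..
    _ ≅ X ⊞ ((Y ⊞ Z₂) ⊞ Z₁) := biprod.mapIso (Iso.refl _) (biprod.braiding ..)
    _ ≅ X ⊞ (Y ⊞ (Z₂ ⊞ Z₁)) := biprod.mapIso (Iso.refl _) (biprod.associator ..)
    _ ≅ (X ⊞ Y) ⊞ (Z₂ ⊞ Z₁) := (biprod.associator ..).symm
    _ ≅ (X ⊞ Y) ⊞ (Z₁ ⊞ Z₂) := biprod.mapIso (Iso.refl _) (biprod.braiding ..)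

lemma addSet_trans {A B X : E} (hA : A ∈ addSet ({B} : Set E))
    (hX : X ∈ addSet ({A} : Set E)) : X ∈ addSet ({B} : Set E) := by
  obtain ⟨W, Z, hW, ⟨e⟩⟩ := hX
  have hsum : ∀ Y : E, sums ({A} : Set E) Y → Y ∈ addSet ({B} : Set E) := by
    intro Y hY
    induction hY with
    | of h => rw [Set.mem_singleton_iff] at h; subst h; exact hA
    | biprod _ _ h1 h2 => exact addSet_biprod h1 h2
  exact addSet_summand (addSet_iso e (hsum W hW))

lemma vanish_target {N : E} (i : ℤ) (hN : ∀ f : N ⟶ N⟦i⟧, f = 0)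
    {Y : E} (hY : sums ({N} : Set E) Y) :
    ∀ f : N ⟶ Y⟦i⟧, f = 0 := by
  induction hY with
  | of h => rw [Set.mem_singleton_iff] at h; subst h; exact hN
  | @biprod A B _ _ h1 h2 =>
    intro f
    have h3 : f ≫ (shiftFunctor E i).map (𝟙 (A ⊞ B)) = f := by simp
    rw [← h3, ← biprod.total, Functor.map_add, Functor.map_comp, Functor.map_comp,
      Preadditive.comp_add, ← Category.assoc, ← Category.assoc,
      h1 (f ≫ (shiftFunctor E i).map biprod.fst),
      h2 (f ≫ (shiftFunctor E i).map biprod.snd)]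
    simp

lemma sums_vanish {N : E} (i : ℤ) (hN : ∀ f : N ⟶ N⟦i⟧, f = 0)
    {X Y : E} (hX : sums ({N} : Set E) X) (hY : sums ({N} : Set E) Y) :
    ∀ f : X ⟶ Y⟦i⟧, f = 0 := by
  induction hX with
  | of h => rw [Set.mem_singleton_iff] at h; subst h; exact vanish_target i hN hY
  | @biprod A B _ _ h1 h2 =>
    intro f
    have h3 : 𝟙 (A ⊞ B) ≫ f = f := by simp
    rw [← h3, ← biprod.total, Preadditive.add_comp, Category.assoc, Category.assoc,
      h1 (biprod.inl ≫ f), h2 (biprod.inr ≫ f)]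
    simp

lemma addSet_vanish {N : E} (i : ℤ) (hN : ∀ f : N ⟶ N⟦i⟧, f = 0)
    {X Y : E} (hX : X ∈ addSet ({N} : Set E)) (hY : Y ∈ addSet ({N} : Set E))
    (f : X ⟶ Y⟦i⟧) : f = 0 := by
  obtain ⟨SX, X', hSX, ⟨eX⟩⟩ := hX
  obtain ⟨SY, Y', hSY, ⟨eY⟩⟩ := hY
  have h0 : eX.hom ≫ biprod.fst ≫ f ≫ (shiftFunctor E i).map (biprod.inl ≫ eY.inv) = 0 :=
    sums_vanish i hN hSX hSY _
  have h1 : f = biprod.inl ≫ eX.inv ≫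
      (eX.hom ≫ biprod.fst ≫ f ≫ (shiftFunctor E i).map (biprod.inl ≫ eY.inv)) ≫
      (shiftFunctor E i).map (eY.hom ≫ biprod.fst) := by
    simp [← Functor.map_comp]
  rw [h1, h0]
  simp

lemma addSet_vanish_neg {N : E} (hN : ∀ f : N ⟶ N⟦(1:ℤ)⟧, f = 0)
    {X Y : E} (hX : X ∈ addSet ({N} : Set E)) (hY : Y ∈ addSet ({N} : Set E))
    (f : X⟦(-1:ℤ)⟧ ⟶ Y) : f = 0 := by
  have h0 : (shiftNegShift X (1:ℤ)).inv ≫ (shiftFunctor E (1:ℤ)).map f = 0 :=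
    addSet_vanish 1 hN hX hY _
  have h1 : (shiftFunctor E (1:ℤ)).map f = 0 := by
    rw [← Iso.hom_inv_id_assoc (shiftNegShift X (1:ℤ)) ((shiftFunctor E (1:ℤ)).map f), h0,
      comp_zero]
  exact (shiftFunctor E (1:ℤ)).map_injective (by rw [h1, Functor.map_zero])

end Helpers

/-- A d-silting object of `per A`: а silting object `P` with
`Hom(P, P ⊗^L_A Θ[i]) = 0` for all `i > 0`. -/
def IsdSiltingObj (P : DA) : Prop :=
  IsSiltingObj P ∧ ∀ i : ℤ, 0 < i → ∀ f : P ⟶ (th.obj P)⟦i⟧, f = 0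

theorem statement_19
    -- the silting-silting correspondence: P is d-silting iff P ⊗^L_A Π is silting
    (corr : ∀ P : DA, IsdSiltingObj DA th P ↔ IsSiltingObj (ind.obj P))
    -- induction is "additive-monoidal" on add-closures: it identifies add Q with
    -- add (ind Q)
    (hadd : ∀ Q X : DA, X ∈ addSet ({Q} : Set DA) → ind.obj X ∈ addSet ({ind.obj Q} : Set DB))
    -- the characteristic Hom-formula of the Calabi-Yau completion
    (homEquiv : ∀ X Y : DA,
      ((ind.obj X ⟶ ind.obj Y) ≃ₗ[k] DirectSum ℕ (fun j => (X ⟶ iterObj th j Y))))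
    (homEquiv_ind : ∀ (X Y : DA) (f : X ⟶ Y),
      homEquiv X Y (ind.map f) = DirectSum.of (fun j => (X ⟶ iterObj th j Y)) 0 f)
    (P Q M : DA)
    (hP : IsdSiltingObj DA th P) (hQ : Q ∈ addSet ({P} : Set DA))
    (hM : IsLeftMutation P Q M) (hMd : IsdSiltingObj DA th M) :
    IsLeftMutation (ind.obj P) (ind.obj Q) (ind.obj M) := by
  obtain ⟨Q₀, f, Z, g, h, ⟨hQ₀, happrox⟩, htri, ⟨eM⟩⟩ := hM
  have hMsilt : IsSiltingObj (ind.obj M) := (corr M).mp hMd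
  have hpre : ∀ f' : ind.obj M ⟶ (ind.obj M)⟦(1:ℤ)⟧, f' = 0 := hMsilt.1 1 le_rfl
  have htri' := ind.map_distinguished _ htri
  set T' := ind.mapTriangle.obj (Triangle.mk f g h) with hT'
  haveI : PreservesBinaryBiproducts ind := preservesBinaryBiproducts_of_preservesBiproducts ind
  have eM' : ind.obj M ≅ ind.obj Z ⊞ ind.obj Q := (ind.mapIso eM).trans (ind.mapBiprod Z Q)
  have hindZ : ind.obj Z ∈ addSet ({ind.obj M} : Set DB) :=
    ⟨ind.obj M, ind.obj Q, sums.of rfl, ⟨eM'⟩⟩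
  have hindQ : ind.obj Q ∈ addSet ({ind.obj M} : Set DB) :=
    ⟨ind.obj M, ind.obj Z, sums.of rfl, ⟨eM'.trans (biprod.braiding _ _)⟩⟩
  refine ⟨ind.obj Q₀, ind.map f, ind.obj Z, ind.map g, T'.mor₃,
    ⟨hadd Q Q₀ hQ₀, ?_⟩, htri', ⟨eM'⟩⟩
  intro Q' hQ' gg
  have hQ'M : Q' ∈ addSet ({ind.obj M} : Set DB) := addSet_trans hindQ hQ'
  have hz : (T'.invRotate).mor₁ ≫ gg = 0 :=
    addSet_vanish_neg hpre hindZ hQ'M _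
  obtain ⟨u, hu⟩ := Triangle.yoneda_exact₂ _ (inv_rot_of_distTriang _ htri') gg hz
  exact ⟨u, hu.symm⟩
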